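/- arXiv:2505.00535 — 2 statements merged into one kernel-verified Lean document; each statement's English description precedes it below -/
import Mathlib

section
/- Let G and H be connected simple graphs, each of order at least two. Then the mobile general position number of the Cartesian product satisfies mob(G □ H) ≥ max{gpo(G), gpo(H)}, where gpo denotes the outer general position number. -/
open SimpleGraph

/-- `S` is a general position set of `G`: for all `u, v ∈ S`, every shortest `u,v`-path
contains no vertex of `S` other than `u` and `v`. -/
def IsGPSet {V : Type*} (G : SimpleGraph V) (S : Set V) : Prop :=
  ∀ u ∈ S, ∀ v ∈ S, ∀ p : G.Walk u v, p.IsPath → p.length = G.dist u v →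
    ∀ w ∈ p.support, w ∈ S → w = u ∨ w = v

/-- A legal move from the configuration `S` to the configuration `T`: a robot at `u ∈ S`
moves to an adjacent unoccupied vertex `v ∉ S` so that the resulting configuration
`(S \ {u}) ∪ {v}` is again a general position set. -/
def LegalMove {V : Type*} (G : SimpleGraph V) (S T : Set V) : Prop :=
  IsGPSet G S ∧ ∃ u ∈ S, ∃ v, v ∉ S ∧ G.Adj u v ∧
    T = insert v (S \ {u}) ∧ IsGPSet G T

/-- `S` is a mobile general position set: there is a finite sequence of configurations
`S = S_0, S_1, …, S_k`, each obtained from the previous one by a legal move, whose union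
is the whole vertex set. -/
def IsMobileGPSet {V : Type*} (G : SimpleGraph V) (S : Set V) : Prop :=
  IsGPSet G S ∧ ∃ (k : ℕ) (f : ℕ → Set V), f 0 = S ∧
    (∀ i < k, LegalMove G (f i) (f (i + 1))) ∧
    (⋃ i ∈ Set.Iic k, f i) = Set.univ

/-- The mobile general position number of `G`: the maximum cardinality of a mobile
general position set. -/
noncomputable def mob {V : Type*} (G : SimpleGraph V) : ℕ :=
  sSup {n | ∃ S : Set V, IsMobileGPSet G S ∧ S.ncard = n}

/-- `S` is an outer general position set of `G`: for every `u ∈ S` and every vertex `v`,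
every shortest `u,v`-path contains no vertex of `S` other than `u` and `v`. -/
def IsOuterGPSet {V : Type*} (G : SimpleGraph V) (S : Set V) : Prop :=
  ∀ u ∈ S, ∀ v : V, ∀ p : G.Walk u v, p.IsPath → p.length = G.dist u v →
    ∀ w ∈ p.support, w ∈ S → w = u ∨ w = v

/-- The outer general position number of `G`. -/
noncomputable def gpo {V : Type*} (G : SimpleGraph V) : ℕ :=
  sSup {n | ∃ S : Set V, IsOuterGPSet G S ∧ S.ncard = n}

/-!
Put robots on `S × {h₀}` for an outer general position set `S` of `G`. Geodesics of `G □ H`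
project to geodesics of both factors, so robots in distinct columns over `S` are in general
position, and because `S` is in outer general position one more robot may stand anywhere off the
other robots' columns, provided it is off their layer or in its own column. Each robot sweeps
its column, one of them also everything off layer `h₀`; then all robots but that one step to an
adjacent layer `h₁`, and it sweeps the layer `h₀` they left. The bound for `H` follows from
`G □ H ≃g H □ G`.
-/

namespace SimpleGraph.Walk

variable {V : Type*} {G : SimpleGraph V}

lemma eq_of_mem_support_of_length_eq_zero {u v w : V} {p : G.Walk u v} (hp : p.length = 0)
    (hw : w ∈ p.support) : w = u := by
  simpa [nil_iff_support_eq.mp (length_eq_zero_iff.mp hp)] using hw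

end SimpleGraph.Walk

section GeneralPosition

variable {V : Type*} {G : SimpleGraph V} {S : Set V} {u v w : V}

lemma IsGPSet.eq_or_eq_of_length_eq_dist (hS : IsGPSet G S) (hu : u ∈ S) (hv : v ∈ S)
    {p : G.Walk u v} (hp : p.length = G.dist u v) (hw : w ∈ p.support) (hwS : w ∈ S) :
    w = u ∨ w = v :=
  hS u hu v hv p (p.isPath_of_length_eq_dist hp) hp w hw hwS

lemma IsOuterGPSet.eq_or_eq_of_length_eq_dist (hS : IsOuterGPSet G S) (hu : u ∈ S)
    {p : G.Walk u v} (hp : p.length = G.dist u v) (hw : w ∈ p.support) (hwS : w ∈ S) :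
    w = u ∨ w = v :=
  hS u hu v p (p.isPath_of_length_eq_dist hp) hp w hw hwS

lemma IsOuterGPSet.isGPSet (hS : IsOuterGPSet G S) : IsGPSet G S :=
  fun u hu v _ => hS u hu v

lemma IsOuterGPSet.mono {T : Set V} (hS : IsOuterGPSet G S) (hTS : T ⊆ S) : IsOuterGPSet G T :=
  fun u hu v p hp hpl w hw hwT => hS u (hTS hu) v p hp hpl w hw (hTS hwT)

/-- Reversing a geodesic reduces to geodesics starting in `A`, unless both ends are `x`. -/
lemma isGPSet_insert_of_forall {A : Set V} {x : V}
    (h : ∀ u ∈ A, ∀ v ∈ insert x A, ∀ p : G.Walk u v, p.length = G.dist u v →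
      ∀ w ∈ p.support, w ∈ insert x A → w = u ∨ w = v) :
    IsGPSet G (insert x A) := by
  intro u hu v hv p _ hp w hw hwT
  by_cases huA : u ∈ A
  · exact h u huA v hv p hp w hw hwT
  by_cases hvA : v ∈ A
  · refine (h v hvA u hu p.reverse ?_ w (by simpa using hw) hwT).symm
    rw [Walk.length_reverse, hp, dist_comm]
  obtain rfl : u = v := (hu.resolve_right huA).trans (hv.resolve_right hvA).symm
  exact .inl (p.eq_of_mem_support_of_length_eq_zero (by simp [hp]) hw)

end GeneralPosition

section Visits

variable {V : Type*}

/-- `Visits G S T A`: a sequence of legal moves leads from `S` to `T`, and every vertex of `A`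
is occupied in one of the configurations passed through. -/
inductive Visits (G : SimpleGraph V) : Set V → Set V → Set V → Prop
  | refl (S : Set V) {A : Set V} (h : A ⊆ S) : Visits G S S A
  | head {S T U A B : Set V} (h : LegalMove G S T) (t : Visits G T U A) (hB : B ⊆ S ∪ A) :
      Visits G S U B

variable {G : SimpleGraph V} {S T U A B : Set V}

lemma Visits.mono (h : Visits G S T A) (hBA : B ⊆ A) : Visits G S T B := by
  induction h with
  | refl S hA => exact .refl S (hBA.trans hA)
  | head hmv t hB => exact .head hmv t (hBA.trans hB)

lemma Visits.union_start (h : Visits G S T A) : Visits G S T (A ∪ S) := by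
  induction h with
  | refl S hA => exact .refl S (Set.union_subset hA le_rfl)
  | head hmv t hB => exact .head hmv t (Set.union_subset hB Set.subset_union_left)

lemma Visits.trans (h₁ : Visits G S T A) (h₂ : Visits G T U B) : Visits G S U (A ∪ B) := by
  induction h₁ with
  | refl S hA =>
    exact h₂.union_start.mono
      (Set.union_subset (hA.trans Set.subset_union_right) Set.subset_union_left)
  | head hmv _ hB ih =>
    exact .head hmv (ih h₂) (by rw [← Set.union_assoc]; exact Set.union_subset_union_left B hB)

lemma Visits.biUnion {ι : Type*} {I : Set ι} (hI : I.Finite) {A : ι → Set V}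
    (h : ∀ i ∈ I, Visits G S S (A i)) : Visits G S S (⋃ i ∈ I, A i) := by
  induction I, hI using Set.Finite.induction_on with
  | empty => exact .refl S (by simp)
  | @insert i I _ _ ih =>
    rw [Set.biUnion_insert]
    exact (h i (Set.mem_insert i I)).trans (ih fun j hj => h j (Set.mem_insert_of_mem i hj))

lemma Visits.exists_seq (h : Visits G S T A) :
    ∃ (k : ℕ) (f : ℕ → Set V), f 0 = S ∧ (∀ i < k, LegalMove G (f i) (f (i + 1))) ∧
      A ⊆ ⋃ i ∈ Set.Iic k, f i := by
  induction h with
  | refl S hA => exact ⟨0, fun _ => S, rfl, by simp, by simpa using hA⟩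
  | @head S T U A B hmv _ hB ih =>
    obtain ⟨k, f, rfl, hmoves, hcov⟩ := ih
    refine ⟨k + 1, fun | 0 => S | i + 1 => f i, rfl, ?_, ?_⟩
    · rintro (_ | i) hi
      · exact hmv
      · exact hmoves i (by omega)
    · intro x hx
      rcases hB hx with hxS | hxA
      · exact Set.mem_biUnion (Set.mem_Iic.2 (Nat.zero_le _)) hxS
      · obtain ⟨i, hi, hxi⟩ := Set.mem_iUnion₂.1 (hcov hxA)
        exact Set.mem_biUnion (Set.mem_Iic.2 (Nat.succ_le_succ hi)) hxi

lemma Visits.isMobileGPSet (hS : IsGPSet G S) (h : Visits G S T Set.univ) :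
    IsMobileGPSet G S := by
  obtain ⟨k, f, hf0, hmoves, hcov⟩ := h.exists_seq
  exact ⟨hS, k, f, hf0, hmoves, Set.eq_univ_of_univ_subset hcov⟩

lemma legalMove_insert {u v : V} (hu : u ∉ B) (hv : v ∉ B) (hadj : G.Adj u v)
    (hGPu : IsGPSet G (insert u B)) (hGPv : IsGPSet G (insert v B)) :
    LegalMove G (insert u B) (insert v B) := by
  refine ⟨hGPu, u, Set.mem_insert u B, v, ?_, hadj, ?_, hGPv⟩
  · rintro (h | h)
    exacts [hadj.ne h.symm, hv h]
  · rw [Set.insert_sdiff_self_of_notMem hu]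

lemma Visits.of_walk {R : Set V} (hR : ∀ z ∈ R, z ∉ B ∧ IsGPSet G (insert z B)) {u v : V}
    (p : G.Walk u v) (hp : ∀ z ∈ p.support, z ∈ R) :
    Visits G (insert u B) (insert v B) {z | z ∈ p.support} := by
  induction p with
  | nil => exact .refl _ (by simp)
  | @cons a b _ hadj q ih =>
    have ha := hR a (hp a (by simp))
    have hb := hR b (hp b (by simp))
    refine .head (legalMove_insert ha.1 hb.1 hadj ha.2 hb.2)
      (ih fun z hz => hp z (by simp [hz])) ?_
    intro z hz
    rcases List.mem_cons.1 hz with rfl | hz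
    exacts [.inl (Set.mem_insert z B), .inr hz]

lemma Visits.of_region [Finite V] {R : Set V}
    (hR : ∀ z ∈ R, z ∉ B ∧ IsGPSet G (insert z B)) {u : V}
    (hconn : ∀ z ∈ R, ∃ p : G.Walk u z, ∀ y ∈ p.support, y ∈ R) :
    Visits G (insert u B) (insert u B) R := by
  refine (Visits.biUnion R.toFinite fun z hz => ?_).mono fun z hz => Set.mem_biUnion hz rfl
  obtain ⟨p, hp⟩ := hconn z hz
  refine (Visits.of_walk hR (p.append p.reverse) ?_).mono ?_
  · simpa [Walk.mem_support_append_iff] using hp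
  · rintro _ rfl
    simp

end Visits

section BoxProd

variable {V W : Type*} {G : SimpleGraph V} {H : SimpleGraph W}

lemma SimpleGraph.Walk.exists_boxProd_proj {x y : V × W} (p : (G □ H).Walk x y) :
    ∃ (q : G.Walk x.1 y.1) (r : H.Walk x.2 y.2), q.length + r.length = p.length ∧
      ∀ z ∈ p.support, z.1 ∈ q.support ∧ z.2 ∈ r.support := by
  induction p with
  | nil => exact ⟨.nil, .nil, rfl, by simp⟩
  | @cons x y _ hxy p ih =>
    obtain ⟨q, r, hlen, hsupp⟩ := ih
    rcases boxProd_adj.1 hxy with ⟨hG, h2⟩ | ⟨hH, h1⟩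
    · refine ⟨.cons hG q, r.copy h2.symm rfl, by simp; omega, ?_⟩
      intro z hz
      rcases List.mem_cons.1 hz with rfl | hz
      · simp [h2]
      · simpa using And.imp_left (List.mem_cons_of_mem _) (hsupp z hz)
    · refine ⟨q.copy h1.symm rfl, .cons hH r, by simp; omega, ?_⟩
      intro z hz
      rcases List.mem_cons.1 hz with rfl | hz
      · simp [h1]
      · simpa using And.imp_right (List.mem_cons_of_mem _) (hsupp z hz)

lemma SimpleGraph.Walk.support_boxProdRight (a : V) {b c : W} (r : H.Walk b c) :
    (r.boxProdRight G a).support = r.support.map (Prod.mk a) :=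
  support_map _ r

lemma SimpleGraph.Walk.support_boxProdLeft (b : W) {a c : V} (q : G.Walk a c) :
    (q.boxProdLeft H b).support = q.support.map (·, b) :=
  support_map _ q

lemma SimpleGraph.Reachable.dist_boxProd {x y : V × W} (h : (G □ H).Reachable x y) :
    (G □ H).dist x y = G.dist x.1 y.1 + H.dist x.2 y.2 := by
  obtain ⟨hG, hH⟩ := reachable_boxProd.1 h
  have := edist_boxProd (G := G) (H := H) x y
  rw [← h.coe_dist_eq_edist, ← hG.coe_dist_eq_edist, ← hH.coe_dist_eq_edist] at this
  exact_mod_cast this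

lemma SimpleGraph.Walk.exists_boxProd_geodesic_proj {x y : V × W} (p : (G □ H).Walk x y)
    (hp : p.length = (G □ H).dist x y) :
    ∃ (q : G.Walk x.1 y.1) (r : H.Walk x.2 y.2), q.length = G.dist x.1 y.1 ∧
      r.length = H.dist x.2 y.2 ∧ ∀ z ∈ p.support, z.1 ∈ q.support ∧ z.2 ∈ r.support := by
  obtain ⟨q, r, hlen, hsupp⟩ := p.exists_boxProd_proj
  have hdist := p.reachable.dist_boxProd
  have hq := dist_le q
  have hr := dist_le r
  exact ⟨q, r, by omega, by omega, hsupp⟩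

variable {S : Set V}

lemma IsGPSet.boxProd_of_injOn_fst (hS : IsGPSet G S) {T : Set (V × W)}
    (hTS : ∀ z ∈ T, z.1 ∈ S) (hinj : Set.InjOn Prod.fst T) : IsGPSet (G □ H) T := by
  intro u hu v hv p _ hp w hw hwT
  obtain ⟨q, _, hq, _, hsupp⟩ := p.exists_boxProd_geodesic_proj hp
  exact (hS.eq_or_eq_of_length_eq_dist (hTS u hu) (hTS v hv) hq (hsupp w hw).1 (hTS w hwT)).imp
    (hinj hwT hu) (hinj hwT hv)

lemma IsOuterGPSet.isGPSet_insert_prod_singleton (hS : IsOuterGPSet G S) {c : V} {h ℓ : W}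
    (hc : c ∉ S) (hh : h ≠ ℓ) : IsGPSet (G □ H) (insert (c, h) (S ×ˢ {ℓ})) := by
  refine isGPSet_insert_of_forall ?_
  rintro u ⟨hu, huℓ⟩ v hv p hp w hw hwT
  obtain ⟨q, r, hq, hr, hsupp⟩ := p.exists_boxProd_geodesic_proj hp
  simp only [Set.mem_insert_iff, Set.mem_prod, Set.mem_singleton_iff] at huℓ hv hwT
  rcases hwT with rfl | ⟨hwS, hwℓ⟩
  · rcases hv with rfl | ⟨-, hvℓ⟩
    · exact .inr rfl
    · -- both ends lie in layer `ℓ`, so the geodesic never leaves it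
      rw [show H.dist u.2 v.2 = 0 by rw [huℓ, hvℓ, dist_self]] at hr
      exact absurd ((r.eq_of_mem_support_of_length_eq_zero hr (hsupp _ hw).2).trans huℓ) hh
  · rcases hS.eq_or_eq_of_length_eq_dist hu hq (hsupp w hw).1 hwS with h1 | h1
    · exact .inl (Prod.ext h1 (hwℓ.trans huℓ.symm))
    · rcases hv with rfl | ⟨-, hvℓ⟩
      · exact (hc (by simpa [h1] using hwS)).elim
      · exact .inr (Prod.ext h1 (hwℓ.trans hvℓ.symm))

end BoxProd

section Construction

variable {V W : Type*} {G : SimpleGraph V} {H : SimpleGraph W} {S : Set V} {a : V} {ℓ : W}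

/-- The positions open to the robot from `a` while the other robots of `S` stand in layer `ℓ`:
off their columns, and off layer `ℓ` except in column `a`. -/
def roamSet (S : Set V) (a : V) (ℓ : W) : Set (V × W) :=
  {z | z.1 ∉ S \ {a} ∧ (z.2 ≠ ℓ ∨ z.1 = a)}

lemma insert_sdiff_singleton_prod (ha : a ∈ S) (ℓ : W) :
    insert (a, ℓ) ((S \ {a}) ×ˢ {ℓ}) = S ×ˢ {ℓ} := by
  ext ⟨x, m⟩
  by_cases hx : x = a
  · subst hx; simp [ha]
  · simp [hx]

lemma mk_mem_roamSet (h : W) : (a, h) ∈ roamSet S a ℓ :=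
  ⟨fun ha => ha.2 rfl, .inr rfl⟩

lemma IsOuterGPSet.isGPSet_insert_of_mem_roamSet (hS : IsOuterGPSet G S) (ha : a ∈ S)
    {z : V × W} (hz : z ∈ roamSet S a ℓ) :
    IsGPSet (G □ H) (insert z ((S \ {a}) ×ˢ {ℓ})) := by
  rcases hz with ⟨hz1, hz2 | rfl⟩
  · exact (hS.mono Set.sdiff_subset).isGPSet_insert_prod_singleton hz1 hz2
  · refine hS.isGPSet.boxProd_of_injOn_fst ?_ ?_
    · rintro _ (rfl | ⟨⟨hx, -⟩, -⟩)
      exacts [ha, hx]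
    · rintro x (rfl | ⟨⟨-, hx⟩, hxℓ⟩) y (rfl | ⟨⟨-, hy⟩, hyℓ⟩) hxy
      · rfl
      · exact (hy hxy.symm).elim
      · exact (hx hxy).elim
      · exact Prod.ext hxy (hxℓ.trans hyℓ.symm)

/-- Up column `a` to the target layer, then along a geodesic of that layer, which avoids the
columns of `S \ {a}` because `S` is in outer general position. -/
lemma IsOuterGPSet.exists_walk_roamSet (hG : G.Connected) (hH : H.Connected)
    (hS : IsOuterGPSet G S) (ha : a ∈ S) (h : W) {z : V × W} (hz : z ∈ roamSet S a ℓ) :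
    ∃ p : (G □ H).Walk (a, h) z, ∀ y ∈ p.support, y ∈ roamSet S a ℓ := by
  obtain ⟨r⟩ := hH.preconnected h z.2
  obtain ⟨q, hq, hql⟩ := hG.exists_path_of_dist a z.1
  have hqS : ∀ g ∈ q.support, g ∉ S \ {a} := fun g hg hgS =>
    (hS a ha z.1 q hq hql g hg hgS.1).elim hgS.2 fun hgz => hz.1 (hgz ▸ hgS)
  refine ⟨(r.boxProdRight G a).append (q.boxProdLeft H z.2), fun y hy => ?_⟩
  rw [Walk.mem_support_append_iff] at hy
  simp only [Walk.support_boxProdRight, Walk.support_boxProdLeft, List.mem_map] at hy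
  rcases hy with ⟨b, -, rfl⟩ | ⟨g, hg, rfl⟩
  · exact mk_mem_roamSet b
  · refine ⟨hqS g hg, hz.2.imp id fun hza => ?_⟩
    subst hza
    exact q.eq_of_mem_support_of_length_eq_zero (by simp [hql]) hg

lemma IsOuterGPSet.visits_roamSet [Finite V] [Finite W] (hG : G.Connected) (hH : H.Connected)
    (hS : IsOuterGPSet G S) (ha : a ∈ S) (h : W) :
    Visits (G □ H) (insert (a, h) ((S \ {a}) ×ˢ {ℓ})) (insert (a, h) ((S \ {a}) ×ˢ {ℓ}))
      (roamSet S a ℓ) :=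
  Visits.of_region (fun _ hz => ⟨fun hzS => hz.1 hzS.1, hS.isGPSet_insert_of_mem_roamSet ha hz⟩)
    fun _ hz => hS.exists_walk_roamSet hG hH ha h hz

def layerShift (S T : Set V) (ℓ ℓ' : W) : Set (V × W) :=
  (S \ T) ×ˢ {ℓ} ∪ T ×ˢ {ℓ'}

lemma layerShift_empty (S : Set V) (ℓ ℓ' : W) : layerShift S ∅ ℓ ℓ' = S ×ˢ {ℓ} := by
  simp [layerShift]

lemma IsGPSet.isGPSet_layerShift (hS : IsGPSet G S) {T : Set V} (hTS : T ⊆ S) (ℓ ℓ' : W) :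
    IsGPSet (G □ H) (layerShift S T ℓ ℓ') := by
  refine hS.boxProd_of_injOn_fst ?_ ?_
  · rintro _ (⟨⟨hx, -⟩, -⟩ | ⟨hx, -⟩)
    exacts [hx, hTS hx]
  · rintro ⟨x, _⟩ (⟨⟨-, hx⟩, hxℓ⟩ | ⟨hx, hxℓ⟩) ⟨y, _⟩ (⟨⟨-, hy⟩, hyℓ⟩ | ⟨hy, hyℓ⟩) (rfl : x = y)
    · exact Prod.ext rfl (hxℓ.trans hyℓ.symm)
    · exact (hx hy).elim
    · exact (hy hx).elim
    · exact Prod.ext rfl (hxℓ.trans hyℓ.symm)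

lemma layerShift_eq_insert {T : Set V} {x : V} (hx : x ∈ S) (hxT : x ∉ T) (ℓ ℓ' : W) :
    layerShift S T ℓ ℓ' = insert (x, ℓ) (layerShift (S \ {x}) T ℓ ℓ') := by
  ext ⟨y, m⟩
  simp only [layerShift, Set.mem_insert_iff, Set.mem_union, Set.mem_prod, Set.mem_sdiff,
    Set.mem_singleton_iff, Prod.mk.injEq]
  by_cases hy : y = x
  · subst hy; tauto
  · tauto

lemma layerShift_insert (T : Set V) (x : V) (ℓ ℓ' : W) :
    layerShift S (insert x T) ℓ ℓ' = insert (x, ℓ') (layerShift (S \ {x}) T ℓ ℓ') := by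
  ext ⟨y, m⟩
  simp only [layerShift, Set.mem_insert_iff, Set.mem_union, Set.mem_prod, Set.mem_sdiff,
    Set.mem_singleton_iff, Prod.mk.injEq]
  tauto

lemma IsGPSet.visits_layerShift (hS : IsGPSet G S) {T : Set V} (hT : T.Finite) (hTS : T ⊆ S)
    {ℓ ℓ' : W} (hadj : H.Adj ℓ ℓ') :
    Visits (G □ H) (S ×ˢ {ℓ}) (layerShift S T ℓ ℓ') ∅ := by
  induction T, hT using Set.Finite.induction_on with
  | empty => exact layerShift_empty S ℓ ℓ' ▸ .refl _ (Set.empty_subset _)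
  | @insert x T hxT _ ih =>
    have hxS : x ∈ S := hTS (Set.mem_insert x T)
    have hTS' : T ⊆ S := (Set.subset_insert x T).trans hTS
    have hfrom := layerShift_eq_insert hxS hxT ℓ ℓ'
    have hto := layerShift_insert (S := S) T x ℓ ℓ'
    have hmove : LegalMove (G □ H) (layerShift S T ℓ ℓ') (layerShift S (insert x T) ℓ ℓ') := by
      rw [hfrom, hto]
      refine legalMove_insert ?_ ?_ (boxProd_adj_right.2 hadj)
        (hfrom ▸ hS.isGPSet_layerShift hTS' ℓ ℓ') (hto ▸ hS.isGPSet_layerShift hTS ℓ ℓ')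
      all_goals simp [layerShift, hxT]
    exact ((ih hTS').trans (.head hmove (.refl _ le_rfl) (Set.empty_subset _))).mono (by simp)

end Construction

section Mobile

variable {V W : Type*} {G : SimpleGraph V} {H : SimpleGraph W}

lemma IsOuterGPSet.isMobileGPSet_prod_singleton [Finite V] [Finite W] (hG : G.Connected)
    (hH : H.Connected) {S : Set V} (hS : IsOuterGPSet G S) {u₀ : V} (hu₀ : u₀ ∈ S)
    {h₀ h₁ : W} (hadj : H.Adj h₀ h₁) : IsMobileGPSet (G □ H) (S ×ˢ {h₀}) := by
  have sweeps : Visits (G □ H) (S ×ˢ {h₀}) (S ×ˢ {h₀}) (⋃ a ∈ S, roamSet S a h₀) :=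
    Visits.biUnion S.toFinite fun a ha =>
      insert_sdiff_singleton_prod ha h₀ ▸ hS.visits_roamSet hG hH ha h₀
  have shift : Visits (G □ H) (S ×ˢ {h₀}) (insert (u₀, h₀) ((S \ {u₀}) ×ˢ {h₁})) ∅ := by
    have h := hS.isGPSet.visits_layerShift (S \ {u₀}).toFinite Set.sdiff_subset hadj
    rwa [layerShift_eq_insert hu₀ (fun h => h.2 rfl), show layerShift (S \ {u₀}) (S \ {u₀}) h₀ h₁
      = (S \ {u₀}) ×ˢ {h₁} by simp [layerShift]] at h
  have lastSweep := hS.visits_roamSet (ℓ := h₁) hG hH hu₀ h₀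
  refine Visits.isMobileGPSet ?_ ((sweeps.trans (shift.trans lastSweep)).mono ?_)
  · exact layerShift_empty S h₀ h₁ ▸ hS.isGPSet.isGPSet_layerShift (Set.empty_subset S) h₀ h₁
  rintro ⟨c, h⟩ -
  by_cases hc : c ∈ S
  · exact .inl (Set.mem_biUnion hc (mk_mem_roamSet h))
  have hc' : c ∉ S \ {u₀} := fun h => hc h.1
  by_cases hh : h = h₀
  · exact .inr (.inr ⟨hc', .inl (hh ▸ hadj.ne)⟩)
  · exact .inl (Set.mem_biUnion hu₀ ⟨hc', .inl hh⟩)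

end Mobile

section Numbers

variable {V V' : Type*} {G : SimpleGraph V} {G' : SimpleGraph V'}

lemma ncard_le_mob [Finite V] {S : Set V} (hS : IsMobileGPSet G S) : S.ncard ≤ mob G := by
  refine le_csSup ⟨Nat.card V, ?_⟩ ⟨S, hS, rfl⟩
  rintro _ ⟨T, -, rfl⟩
  exact Set.ncard_le_card T

lemma gpo_le {n : ℕ} (h : ∀ S, IsOuterGPSet G S → S.ncard ≤ n) : gpo G ≤ n :=
  csSup_le ⟨0, ∅, fun _ h => h.elim, Set.ncard_empty V⟩ fun _ ⟨S, hS, hn⟩ => hn ▸ h S hS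

lemma gpo_le_mob_boxProd [Finite V] [Finite V'] (hG : G.Connected) (hG' : G'.Connected)
    (hV' : 2 ≤ Nat.card V') : gpo G ≤ mob (G □ G') := by
  refine gpo_le fun S hS => ?_
  obtain rfl | ⟨u₀, hu₀⟩ := S.eq_empty_or_nonempty
  · simp
  have : Nontrivial V' := Finite.one_lt_card_iff_nontrivial.1 hV'
  obtain ⟨h₀⟩ := hG'.nonempty
  obtain ⟨h₁, hadj⟩ := hG'.preconnected.exists_adj_of_nontrivial h₀
  simpa [Set.ncard_prod] using ncard_le_mob (hS.isMobileGPSet_prod_singleton hG hG' hu₀ hadj)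

end Numbers

section Iso

variable {V V' : Type*} {G : SimpleGraph V} {G' : SimpleGraph V'} (e : G ≃g G')

lemma SimpleGraph.Reachable.dist_map_le {u v : V} (f : G →g G') (h : G.Reachable u v) :
    G'.dist (f u) (f v) ≤ G.dist u v := by
  obtain ⟨p, hp⟩ := h.exists_walk_length_eq_dist
  simpa [hp] using dist_le (p.map f)

lemma SimpleGraph.Iso.dist_apply (u v : V) : G'.dist (e u) (e v) = G.dist u v := by
  by_cases h : G.Reachable u v
  · refine le_antisymm (h.dist_map_le e.toHom) ?_
    simpa using (Iso.reachable_iff (φ := e).2 h).dist_map_le e.symm.toHom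
  · rw [dist_eq_zero_of_not_reachable h,
      dist_eq_zero_of_not_reachable (Iso.reachable_iff.not.2 h)]

lemma IsGPSet.image_iso {S : Set V} (hS : IsGPSet G S) : IsGPSet G' (e '' S) := by
  rintro _ ⟨u, hu, rfl⟩ _ ⟨v, hv, rfl⟩ p _ hp _ hw ⟨w, hwS, rfl⟩
  let q : G.Walk u v := (p.map e.symm.toHom).copy (e.symm_apply_apply u) (e.symm_apply_apply v)
  have hq : q.length = G.dist u v := by simp [q, hp, e.dist_apply]
  have hwq : w ∈ q.support := by simpa [q] using List.mem_map_of_mem (f := e.symm) hw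
  exact (hS.eq_or_eq_of_length_eq_dist hu hv hq hwq hwS).imp (congrArg e) (congrArg e)

lemma LegalMove.image_iso {S T : Set V} (h : LegalMove G S T) : LegalMove G' (e '' S) (e '' T) := by
  obtain ⟨hS, u, hu, v, hv, hadj, rfl, hT⟩ := h
  refine ⟨hS.image_iso e, e u, Set.mem_image_of_mem e hu, e v, ?_, e.map_adj_iff.2 hadj, ?_,
    hT.image_iso e⟩
  · simpa using hv
  · rw [Set.image_insert_eq, Set.image_sdiff e.injective, Set.image_singleton]

lemma IsMobileGPSet.image_iso {S : Set V} (h : IsMobileGPSet G S) : IsMobileGPSet G' (e '' S) := by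
  obtain ⟨hS, k, f, rfl, hmoves, hcov⟩ := h
  refine ⟨hS.image_iso e, k, fun i => e '' f i, rfl, fun i hi => (hmoves i hi).image_iso e, ?_⟩
  rw [← Set.image_iUnion₂, hcov, Set.image_univ, e.surjective.range_eq]

lemma mob_congr (e : G ≃g G') : mob G = mob G' := by
  unfold mob
  congr 1
  ext n
  constructor
  · rintro ⟨S, hS, rfl⟩
    exact ⟨e '' S, hS.image_iso e, Set.ncard_image_of_injective S e.injective⟩
  · rintro ⟨S, hS, rfl⟩
    exact ⟨e.symm '' S, hS.image_iso e.symm, Set.ncard_image_of_injective S e.symm.injective⟩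

end Iso

theorem mob_boxProd_ge_max_gpo {V W : Type*} [Finite V] [Finite W]
    (G : SimpleGraph V) (H : SimpleGraph W)
    (hG : G.Connected) (hH : H.Connected)
    (hV : 2 ≤ Nat.card V) (hW : 2 ≤ Nat.card W) :
    max (gpo G) (gpo H) ≤ mob (G □ H) :=
  max_le (gpo_le_mob_boxProd hG hH hW)
    ((gpo_le_mob_boxProd hH hG hV).trans_eq (mob_congr (boxProdComm H G)))
end

section
/- Let P_∞ be the two-way infinite path, i.e., the graph on vertex set ℤ in which i and j are adjacent iff |i − j| = 1. Then the mobile general position number of the infinite grid satisfies mob(P_∞ □ P_∞) = 4. -/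
/-!
In the grid the graph distance is the `ℓ¹` distance, so a set is in general position iff no point
of it lies on an `ℓ¹` geodesic between two others. For the upper bound, split `S` into its minimal
points for the product order and the rest. Both parts are antichains (if `a < b` with `a` not
minimal, then `a` lies between `b` and a point of `S` below `a`), and of three pairwise
incomparable points the middle one lies between the other two, so each part has at most two points.

For the lower bound, the robots at `(0,0), (1,2), (2,-1), (3,1)` shift themselves one step east,
or one step north, by four legal moves. Legal moves are reversible and commute with translations,
so every translate of this configuration can be reached from every other one, and chaining these
reconfigurations along an enumeration of `ℤ²` sweeps the whole grid.
-/

open SimpleGraph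

/-- The two-way infinite path on `ℤ`: `i` and `j` are adjacent iff `|i - j| = 1`. -/
def pathZ : SimpleGraph ℤ := SimpleGraph.fromRel (fun i j => j = i + 1)

/-- `S` is a mobile general position set of a (possibly infinite) graph: `S` is a finite
general position set and there is an infinite sequence of configurations
`S = S_0, S_1, S_2, …`, each obtained from the previous one by a legal move, whose union
is the whole vertex set. -/
def IsMobileGPSetInf {V : Type*} (G : SimpleGraph V) (S : Set V) : Prop :=
  S.Finite ∧ IsGPSet G S ∧ ∃ f : ℕ → Set V, f 0 = S ∧
    (∀ i : ℕ, LegalMove G (f i) (f (i + 1))) ∧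
    (⋃ i : ℕ, f i) = Set.univ

/-- The mobile general position number of a (possibly infinite) graph. -/
noncomputable def mobInf {V : Type*} (G : SimpleGraph V) : ℕ :=
  sSup {n | ∃ S : Set V, IsMobileGPSetInf G S ∧ S.ncard = n}

open Relation
open scoped Pointwise

section GeneralPosition

variable {V : Type*} {G : SimpleGraph V}

theorem LegalMove.symm {S T : Set V} (h : LegalMove G S T) : LegalMove G T S := by
  obtain ⟨hS, u, hu, v, hv, huv, rfl, hT⟩ := h
  refine ⟨hT, v, Set.mem_insert v _, u, fun hu' => ?_, huv.symm, ?_, hS⟩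
  · rcases hu' with rfl | ⟨-, hne⟩
    exacts [hv hu, hne rfl]
  · ext w
    by_cases hwu : w = u
    · simp [hwu, hu]
    · by_cases hwv : w = v
      · simp [hwv, hv, huv.ne.symm]
      · simp [hwu, hwv]

theorem isGPSet_iff_dist (hG : G.Connected) {S : Set V} :
    IsGPSet G S ↔ ∀ u ∈ S, ∀ v ∈ S, ∀ w ∈ S,
      G.dist u w + G.dist w v = G.dist u v → w = u ∨ w = v := by
  classical
  constructor
  · intro hS u hu v hv w hw hbetween
    obtain ⟨p, hp⟩ := hG.exists_walk_length_eq_dist u w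
    obtain ⟨q, hq⟩ := hG.exists_walk_length_eq_dist w v
    have hlen : (p.append q).length = G.dist u v := by
      rw [Walk.length_append, hp, hq, hbetween]
    exact hS u hu v hv _ ((p.append q).isPath_of_length_eq_dist hlen) hlen w
      ((p.mem_support_append_iff q).mpr (Or.inl p.end_mem_support)) hw
  · intro hS u hu v hv p _ hp w hwp hw
    refine hS u hu v hv w hw (le_antisymm ?_ (hG.dist_triangle))
    have hsplit := congrArg Walk.length (p.take_spec hwp)
    rw [Walk.length_append] at hsplit
    have := dist_le (p.takeUntil w hwp)
    have := dist_le (p.dropUntil w hwp)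
    omega

end GeneralPosition

namespace Relation

variable {α : Type*} {R : α → α → Prop}

theorem ReflTransGen.vadd_of_closure_eq_top {M : Type*} [AddGroup M] [AddAction M α]
    [Std.Symm R] (hvadd : ∀ (t : M) {x y : α}, R x y → R (t +ᵥ x) (t +ᵥ y))
    {s : Set M} (hs : AddSubgroup.closure s = ⊤) {x : α} (hx : ∀ t ∈ s, ReflTransGen R x (t +ᵥ x))
    (t t' : M) : ReflTransGen R (t +ᵥ x) (t' +ᵥ x) := by
  have hlift (t : M) {y z : α} (h : ReflTransGen R y z) : ReflTransGen R (t +ᵥ y) (t +ᵥ z) :=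
    ReflTransGen.lift (t +ᵥ ·) (fun _ _ => hvadd t) _ _ h
  have hreach (u : M) : ReflTransGen R x (u +ᵥ x) := by
    induction (hs ▸ AddSubgroup.mem_top u : u ∈ AddSubgroup.closure s)
      using AddSubgroup.closure_induction with
    | mem t ht => exact hx t ht
    | zero => rw [zero_vadd]
    | add t t' _ _ ih ih' => exact ih.trans (by simpa [add_vadd] using hlift t ih')
    | neg t _ ih => simpa using Std.Symm.symm _ _ (hlift (-t) ih)
  simpa [add_vadd] using hlift t (hreach (-t + t'))

theorem TransGen.exists_chain {a b : α} (h : TransGen R a b) :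
    ∃ (k : ℕ) (c : ℕ → α), c 0 = a ∧ c (k + 1) = b ∧ ∀ i ≤ k, R (c i) (c (i + 1)) := by
  induction h using TransGen.head_induction_on with
  | @single a hab => exact ⟨0, fun i => if i = 0 then a else b, rfl, rfl, by simpa using hab⟩
  | @head a a' haa' _ ih =>
    obtain ⟨k, c, hc0, hck, hc⟩ := ih
    refine ⟨k + 1, fun i => Nat.casesOn i a c, rfl, hck, ?_⟩
    rintro (_ | i) hi
    · simpa [hc0] using haa'
    · exact hc i (by omega)

theorem exists_seq_of_transGen (g : ℕ → α) (h : ∀ n, TransGen R (g n) (g (n + 1))) :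
    ∃ f : ℕ → α, f 0 = g 0 ∧ (∀ i, R (f i) (f (i + 1))) ∧ ∀ n, ∃ i, f i = g n := by
  choose k c hc0 hck hc using fun n => (h n).exists_chain
  -- the state `(n, j)` stands for the point `c n j` of the `n`-th chain
  let step : ℕ × ℕ → ℕ × ℕ := fun p => if p.2 < k p.1 then (p.1, p.2 + 1) else (p.1 + 1, 0)
  let state : ℕ → ℕ × ℕ := fun i => step^[i] (0, 0)
  have state_succ (i : ℕ) : state (i + 1) = step (state i) :=
    Function.iterate_succ_apply' step i (0, 0)
  have state_le (i : ℕ) : (state i).2 ≤ k (state i).1 := by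
    induction i with
    | zero => simp [state]
    | succ i ih =>
      rw [state_succ]
      simp only [step]
      split_ifs <;> simp only <;> omega
  have state_add (i n : ℕ) (hi : state i = (n, 0)) (j : ℕ) (hj : j ≤ k n) :
      state (i + j) = (n, j) := by
    induction j with
    | zero => exact hi
    | succ j ih => rw [← add_assoc, state_succ, ih (by omega)]; simp [step, show j < k n by omega]
  have visits (n : ℕ) : ∃ i, state i = (n, 0) := by
    induction n with
    | zero => exact ⟨0, rfl⟩
    | succ n ih =>
      obtain ⟨i, hi⟩ := ih
      exact ⟨i + k n + 1, by rw [state_succ, state_add i n hi _ le_rfl]; simp [step]⟩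
  refine ⟨fun i => c (state i).1 (state i).2, hc0 0, fun i => ?_, fun n => ?_⟩
  · show R (c (state i).1 (state i).2) (c (state (i + 1)).1 (state (i + 1)).2)
    have hi := state_le i
    rw [state_succ]
    generalize state i = p at hi ⊢
    obtain ⟨n, j⟩ := p
    simp only [step] at hi ⊢
    split_ifs with hj
    · exact hc n j hi
    · obtain rfl : j = k n := by omega
      simpa [hc0, ← hck] using hc n (k n) le_rfl
  · obtain ⟨i, hi⟩ := visits n
    exact ⟨i, by simp [hi, hc0]⟩

end Relation

theorem pathZ_adj {a b : ℤ} : pathZ.Adj a b ↔ b = a + 1 ∨ a = b + 1 := by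
  simp only [pathZ, fromRel_adj]
  omega

theorem exists_pathZ_walk_length_eq_natAbs (a b : ℤ) :
    ∃ p : pathZ.Walk a b, p.length = (a - b).natAbs := by
  induction h : (a - b).natAbs generalizing a with
  | zero =>
    obtain rfl : a = b := by omega
    exact ⟨.nil, rfl⟩
  | succ n ih =>
    obtain ⟨a', ha', hn⟩ : ∃ a', pathZ.Adj a a' ∧ (a' - b).natAbs = n :=
      if hab : a < b then ⟨a + 1, pathZ_adj.2 (.inl rfl), by omega⟩
      else ⟨a - 1, pathZ_adj.2 (.inr (by ring)), by omega⟩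
    obtain ⟨p, hp⟩ := ih a' hn
    exact ⟨.cons ha' p, by simp [hp]⟩

theorem natAbs_sub_le_pathZ_walk_length {a b : ℤ} (p : pathZ.Walk a b) :
    (a - b).natAbs ≤ p.length := by
  induction p with
  | nil => simp
  | cons h p ih => rw [pathZ_adj] at h; simp only [Walk.length_cons]; omega

theorem pathZ_edist (a b : ℤ) : pathZ.edist a b = (a - b).natAbs := by
  obtain ⟨p, hp⟩ := exists_pathZ_walk_length_eq_natAbs a b
  refine le_antisymm (hp ▸ edist_le p) ?_
  obtain ⟨q, hq⟩ := p.reachable.exists_walk_length_eq_edist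
  exact hq ▸ Nat.cast_le.2 (natAbs_sub_le_pathZ_walk_length q)

def manhattan (u v : ℤ × ℤ) : ℕ := (u.1 - v.1).natAbs + (u.2 - v.2).natAbs

theorem grid_dist (u v : ℤ × ℤ) : (pathZ □ pathZ).dist u v = manhattan u v := by
  rw [SimpleGraph.dist, edist_boxProd, pathZ_edist, pathZ_edist, ← Nat.cast_add,
    ENat.toNat_natCast, manhattan]

theorem grid_adj {u v : ℤ × ℤ} : (pathZ □ pathZ).Adj u v ↔ manhattan u v = 1 := by
  simp only [boxProd_adj, pathZ_adj, manhattan]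
  omega

theorem pathZ_connected : pathZ.Connected :=
  ⟨fun a b => ⟨(exists_pathZ_walk_length_eq_natAbs a b).choose⟩⟩

def IsManhattanGP (S : Set (ℤ × ℤ)) : Prop :=
  ∀ u ∈ S, ∀ v ∈ S, ∀ w ∈ S, manhattan u w + manhattan w v = manhattan u v → w = u ∨ w = v

theorem isGPSet_grid_iff {S : Set (ℤ × ℤ)} : IsGPSet (pathZ □ pathZ) S ↔ IsManhattanGP S := by
  simp only [isGPSet_iff_dist (pathZ_connected.boxProd pathZ_connected), grid_dist, IsManhattanGP]

theorem IsManhattanGP.mono {S T : Set (ℤ × ℤ)} (hT : IsManhattanGP T) (hST : S ⊆ T) :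
    IsManhattanGP S :=
  fun u hu v hv w hw => hT u (hST hu) v (hST hv) w (hST hw)

theorem manhattan_between_of_incomparable {a b c : ℤ × ℤ} (hab : ¬a ≤ b) (hba : ¬b ≤ a)
    (hac : ¬a ≤ c) (hca : ¬c ≤ a) (hbc : ¬b ≤ c) (hcb : ¬c ≤ b) :
    manhattan a b + manhattan b c = manhattan a c ∨
      manhattan b a + manhattan a c = manhattan b c ∨
      manhattan a c + manhattan c b = manhattan a b := by
  simp only [Prod.le_def, not_and_or, not_le, manhattan] at *
  omega

theorem IsManhattanGP.ncard_le_two {A : Set (ℤ × ℤ)} (hA : IsManhattanGP A)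
    (hanti : IsAntichain (· ≤ ·) A) : A.ncard ≤ 2 := by
  by_contra! h
  obtain ⟨t, htA, ht⟩ := Set.exists_subset_card_eq h
  obtain ⟨a, b, c, hab, hac, hbc, rfl⟩ := Set.ncard_eq_three.mp ht
  have ha : a ∈ A := htA (by simp)
  have hb : b ∈ A := htA (by simp)
  have hc : c ∈ A := htA (by simp)
  rcases manhattan_between_of_incomparable (hanti ha hb hab) (hanti hb ha hab.symm)
      (hanti ha hc hac) (hanti hc ha hac.symm) (hanti hb hc hbc) (hanti hc hb hbc.symm)
    with h | h | h
  · rcases hA a ha c hc b hb h with rfl | rfl <;> simp_all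
  · rcases hA b hb c hc a ha h with rfl | rfl <;> simp_all
  · rcases hA a ha b hb c hc h with rfl | rfl <;> simp_all

theorem IsManhattanGP.ncard_le_four {S : Set (ℤ × ℤ)} (hS : IsManhattanGP S) : S.ncard ≤ 4 := by
  let M := {x | Minimal (· ∈ S) x}
  have hMS : M ⊆ S := fun x hx => hx.prop
  have hrest : IsAntichain (· ≤ ·) (S \ M) := by
    rintro a ⟨haS, haM⟩ b ⟨hbS, -⟩ hab hle
    obtain ⟨m, hma, hmS⟩ := exists_lt_of_not_minimal haS haM
    -- `a` lies in the box spanned by `m < a ≤ b`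
    have hbetween : manhattan m a + manhattan a b = manhattan m b := by
      simp only [Prod.lt_iff, Prod.le_def, manhattan] at hma hle ⊢
      omega
    rcases hS m hmS b hbS a haS hbetween with rfl | rfl
    exacts [hma.ne rfl, hab rfl]
  calc S.ncard = (M ∪ S \ M).ncard := by rw [Set.union_sdiff_cancel hMS]
    _ ≤ M.ncard + (S \ M).ncard := Set.ncard_union_le _ _
    _ ≤ 2 + 2 := add_le_add ((hS.mono hMS).ncard_le_two (setOfPred_minimal_antichain _))
        ((hS.mono Set.sdiff_subset).ncard_le_two hrest)

theorem manhattan_vadd (t u v : ℤ × ℤ) : manhattan (t +ᵥ u) (t +ᵥ v) = manhattan u v := by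
  simp only [manhattan, vadd_eq_add, Prod.fst_add, Prod.snd_add, add_sub_add_left_eq_sub]

theorem IsManhattanGP.vadd {S : Set (ℤ × ℤ)} (hS : IsManhattanGP S) (t : ℤ × ℤ) :
    IsManhattanGP (t +ᵥ S) := by
  rintro _ ⟨u, hu, rfl⟩ _ ⟨v, hv, rfl⟩ _ ⟨w, hw, rfl⟩ h
  simp only [manhattan_vadd] at h
  rcases hS u hu v hv w hw h with rfl | rfl <;> simp

theorem LegalMove.grid_vadd (t : ℤ × ℤ) {S T : Set (ℤ × ℤ)}
    (h : LegalMove (pathZ □ pathZ) S T) : LegalMove (pathZ □ pathZ) (t +ᵥ S) (t +ᵥ T) := by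
  obtain ⟨hS, u, hu, v, hv, huv, rfl, hT⟩ := h
  rw [isGPSet_grid_iff] at hS hT
  refine ⟨isGPSet_grid_iff.2 (hS.vadd t), t +ᵥ u, Set.vadd_mem_vadd_set hu, t +ᵥ v,
    by rwa [Set.vadd_mem_vadd_set_iff], ?_, ?_, isGPSet_grid_iff.2 (hT.vadd t)⟩
  · rwa [grid_adj, manhattan_vadd, ← grid_adj]
  · rw [Set.vadd_set_insert, Set.vadd_set_sdiff, Set.vadd_set_singleton]

instance {V : Type*} (G : SimpleGraph V) : Std.Symm (LegalMove G) :=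
  ⟨fun _ _ => LegalMove.symm⟩

instance (F : Finset (ℤ × ℤ)) : Decidable (IsManhattanGP F) :=
  decidable_of_iff (∀ u ∈ F, ∀ v ∈ F, ∀ w ∈ F,
    manhattan u w + manhattan w v = manhattan u v → w = u ∨ w = v) (by simp [IsManhattanGP])

def IsGridMove (F F' : Finset (ℤ × ℤ)) : Prop :=
  IsManhattanGP F ∧ IsManhattanGP F' ∧
    ∃ u ∈ F, ∃ v ∈ F', v ∉ F ∧ manhattan u v = 1 ∧ F' = insert v (F.erase u)

instance : DecidableRel IsGridMove := fun F F' => by unfold IsGridMove; infer_instance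

theorem IsGridMove.legalMove {F F' : Finset (ℤ × ℤ)} (h : IsGridMove F F') :
    LegalMove (pathZ □ pathZ) F F' := by
  obtain ⟨hF, hF', u, hu, v, -, hv, huv, rfl⟩ := h
  refine ⟨isGPSet_grid_iff.2 hF, u, hu, v, hv, grid_adj.2 huv, by simp, isGPSet_grid_iff.2 hF'⟩

theorem transGen_legalMove_of_isChain {F F' : Finset (ℤ × ℤ)} (l : List (Finset (ℤ × ℤ)))
    (hl : List.IsChain IsGridMove (F :: l)) (hF' : l.getLast? = some F') :
    TransGen (LegalMove (pathZ □ pathZ)) F F' := by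
  cases l with
  | nil => cases hF'
  | cons F₁ l =>
    obtain ⟨hF₁, hl⟩ := List.isChain_cons_cons.1 hl
    have hlast : (F₁ :: l).getLast (List.cons_ne_nil _ _) = F' := by
      simpa [List.getLast?_eq_some_getLast] using hF'
    exact .head' hF₁.legalMove <| ReflTransGen.lift ((↑) : Finset (ℤ × ℤ) → Set (ℤ × ℤ))
      (fun _ _ => IsGridMove.legalMove) _ _
      (List.relationReflTransGen_of_exists_isChain_cons l hl hlast)

def robots : Finset (ℤ × ℤ) := {(0, 0), (1, 2), (2, -1), (3, 1)}

theorem robots_shift_east :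
    TransGen (LegalMove (pathZ □ pathZ)) robots (((1, 0) : ℤ × ℤ) +ᵥ (robots : Set (ℤ × ℤ))) := by
  rw [← Finset.coe_vadd_finset]
  exact transGen_legalMove_of_isChain
    [{(0, 0), (1, 2), (2, -1), (4, 1)}, {(0, 0), (1, 2), (3, -1), (4, 1)},
      {(0, 0), (2, 2), (3, -1), (4, 1)}, {(1, 0), (2, 2), (3, -1), (4, 1)}]
    (by decide) (by decide)

theorem robots_shift_north :
    TransGen (LegalMove (pathZ □ pathZ)) robots (((0, 1) : ℤ × ℤ) +ᵥ (robots : Set (ℤ × ℤ))) := by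
  rw [← Finset.coe_vadd_finset]
  exact transGen_legalMove_of_isChain
    [{(0, 0), (1, 3), (2, -1), (3, 1)}, {(0, 0), (1, 3), (2, -1), (3, 2)},
      {(0, 1), (1, 3), (2, -1), (3, 2)}, {(0, 1), (1, 3), (2, 0), (3, 2)}]
    (by decide) (by decide)

theorem closure_unit_vectors : AddSubgroup.closure {((1, 0) : ℤ × ℤ), (0, 1)} = ⊤ := by
  refine eq_top_iff.2 fun t _ => ?_
  rw [show t = t.1 • ((1, 0) : ℤ × ℤ) + t.2 • ((0, 1) : ℤ × ℤ) by ext <;> simp]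
  exact add_mem (zsmul_mem (AddSubgroup.subset_closure (by simp)) _)
    (zsmul_mem (AddSubgroup.subset_closure (by simp)) _)

theorem transGen_robots_vadd (s t : ℤ × ℤ) :
    TransGen (LegalMove (pathZ □ pathZ)) (s +ᵥ (robots : Set (ℤ × ℤ)))
      (t +ᵥ (robots : Set (ℤ × ℤ))) := by
  have hreach := ReflTransGen.vadd_of_closure_eq_top (fun t _ _ => LegalMove.grid_vadd t)
    closure_unit_vectors (x := (robots : Set (ℤ × ℤ)))
    (by rintro _ (rfl | rfl); exacts [robots_shift_east.to_reflTransGen,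
      robots_shift_north.to_reflTransGen])
  have hshift := robots_shift_east.lift (s +ᵥ ·) fun _ _ => LegalMove.grid_vadd s
  rw [Function.onFun, vadd_vadd] at hshift
  exact hshift.trans_left (hreach _ t)

theorem isMobileGPSetInf_robots : IsMobileGPSetInf (pathZ □ pathZ) ↑robots := by
  obtain ⟨d, hd⟩ := exists_surjective_nat (ℤ × ℤ)
  obtain ⟨f, hf0, hf, hvisits⟩ := exists_seq_of_transGen
    (fun n => (d n - d 0) +ᵥ (robots : Set (ℤ × ℤ))) fun n => transGen_robots_vadd _ _
  refine ⟨robots.finite_toSet, isGPSet_grid_iff.2 (by decide), f, by simpa using hf0, hf,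
    Set.eq_univ_of_forall fun p => ?_⟩
  obtain ⟨n, hn⟩ := hd (p + d 0)
  obtain ⟨i, hi⟩ := hvisits n
  exact Set.mem_iUnion.2 ⟨i, hi ▸ ⟨0, by decide, by simp [hn]⟩⟩

theorem mobInf_infinite_grid : mobInf (pathZ □ pathZ) = 4 := by
  refine IsGreatest.csSup_eq ⟨⟨robots, isMobileGPSetInf_robots, by simp [robots]⟩, ?_⟩
  rintro n ⟨S, ⟨-, hS, -⟩, rfl⟩
  exact (isGPSet_grid_iff.1 hS).ncard_le_four
end
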